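/- Let a, b be coprime positive integers with a ≠ b and let X > 0 be real. Then the two-dimensional Lebesgue measures satisfy vol(R′(X)) = vol(R(X)) = X·vol(S_{b/a}) / √|a² − b²|. -/

import Mathlib

open scoped Classical

/-- `p_u(s,t)`. -/
noncomputable def pForm (u s t : ℝ) : ℝ :=
  -2 * s ^ 2 - ((1 - u ^ 2) / |1 - u ^ 2|) * t ^ 2 +
    (4 / Real.sqrt |1 - u ^ 2|) * s * t

/-- `q_u(s,t)`. -/
noncomputable def qForm (u s t : ℝ) : ℝ :=
  2 * s ^ 2 - ((1 - u ^ 2) / |1 - u ^ 2|) * t ^ 2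

/-- `r_u(s,t)`. -/
noncomputable def rForm (u s t : ℝ) : ℝ :=
  2 * s ^ 2 - (2 * (1 - u ^ 2) / Real.sqrt |1 - u ^ 2|) * s * t +
    ((1 - u ^ 2) / |1 - u ^ 2|) * t ^ 2

/-- The region `S_u`. -/
noncomputable def Sregion (u : ℝ) : Set (ℝ × ℝ) :=
  {p | 0 < p.2 ∧ 0 < pForm u p.1 p.2 ∧ pForm u p.1 p.2 ≤ 1 ∧
    0 < qForm u p.1 p.2 ∧ qForm u p.1 p.2 ≤ 1 ∧ 0 < rForm u p.1 p.2}

/-- `Q₁(s,t)` with real arguments. -/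
noncomputable def Q1r (a b : ℤ) (s t : ℝ) : ℝ :=
  2 * s ^ 2 + ((a : ℝ) ^ 2 - (b : ℝ) ^ 2) * t ^ 2 - 4 * (a : ℝ) * s * t

/-- `Q₂(s,t)` with real arguments. -/
noncomputable def Q2r (a b : ℤ) (s t : ℝ) : ℝ :=
  -2 * s ^ 2 + ((a : ℝ) ^ 2 - (b : ℝ) ^ 2) * t ^ 2

/-- `Q₃(s,t)` with real arguments. -/
noncomputable def Q3r (a b : ℤ) (s t : ℝ) : ℝ :=
  -2 * (a : ℝ) * s ^ 2 + 2 * ((a : ℝ) ^ 2 - (b : ℝ) ^ 2) * s * t -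
    (a : ℝ) * ((a : ℝ) ^ 2 - (b : ℝ) ^ 2) * t ^ 2

/-- The region `R(X)`. -/
noncomputable def Rregion (a b : ℤ) (X : ℝ) : Set (ℝ × ℝ) :=
  {p | 0 < p.2 ∧ Q3r a b p.1 p.2 < 0 ∧
    -X ≤ Q1r a b p.1 p.2 ∧ Q1r a b p.1 p.2 < 0 ∧
    -X ≤ Q2r a b p.1 p.2 ∧ Q2r a b p.1 p.2 < 0}

/-- The region `R′(X)`. -/
noncomputable def Rregion' (a b : ℤ) (X : ℝ) : Set (ℝ × ℝ) :=
  {p ∈ Rregion a b X | p.1 * (p.1 - (a : ℝ) * p.2) ≠ 0 ∧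
    2 * (a : ℝ) * p.1 ≠ ((a : ℝ) ^ 2 - (b : ℝ) ^ 2) * p.2}


/-! The diagonal substitution `(s, t) ↦ (√X s, √X t / √|a² - b²|)` turns `Q₁, Q₂, Q₃` into
`-X p_u, -X q_u, -aX r_u` with `u = b / a`, so it maps `S_u` onto `R(X)` and multiplies areas by
its determinant `X / √|a² - b²|`. The set `R(X) \ R′(X)` lies on three lines through the origin,
hence is null. -/

open MeasureTheory

lemma volume_setOf_mul_fst_eq_mul_snd {α : ℝ} (hα : α ≠ 0) (β : ℝ) :
    volume {p : ℝ × ℝ | α * p.1 = β * p.2} = 0 := by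
  let φ : ℝ × ℝ →ₗ[ℝ] ℝ := α • LinearMap.fst ℝ ℝ ℝ - β • LinearMap.snd ℝ ℝ ℝ
  have hker : {p : ℝ × ℝ | α * p.1 = β * p.2} = LinearMap.ker φ := by
    ext p; simp [φ, sub_eq_zero]
  have hφ : LinearMap.ker φ ≠ ⊤ := fun h => hα <| by
    simpa [φ] using LinearMap.congr_fun (LinearMap.ker_eq_top.1 h) (1, 0)
  rw [hker]
  exact Measure.addHaar_submodule volume _ hφ

lemma volume_image_prodMap_mul (c d : ℝ) (s : Set (ℝ × ℝ)) :
    volume (Prod.map (c * ·) (d * ·) '' s) = ENNReal.ofReal |c * d| * volume s := by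
  have := Measure.addHaar_image_linearMap volume
    ((c • LinearMap.id).prodMap (d • LinearMap.id : ℝ →ₗ[ℝ] ℝ)) s
  simp only [LinearMap.det_prodMap, LinearMap.det_smul, LinearMap.det_id, Module.finrank_self,
    pow_one, mul_one] at this
  exact this

lemma one_sub_div_sq_div_abs {a : ℝ} (ha : a ≠ 0) (b : ℝ) :
    (1 - (b / a) ^ 2) / |1 - (b / a) ^ 2| = (a ^ 2 - b ^ 2) / |a ^ 2 - b ^ 2| := by
  have h : 1 - (b / a) ^ 2 = (a ^ 2 - b ^ 2) / a ^ 2 := by field_simp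
  rw [h, abs_div, abs_of_pos (by positivity : 0 < a ^ 2), div_div_div_cancel_right₀ (by positivity)]

lemma sqrt_abs_one_sub_div_sq {a : ℝ} (ha : 0 < a) (b : ℝ) :
    √|1 - (b / a) ^ 2| = √|a ^ 2 - b ^ 2| / a := by
  have h : 1 - (b / a) ^ 2 = (a ^ 2 - b ^ 2) / a ^ 2 := by field_simp
  rw [h, abs_div, abs_of_pos (by positivity : 0 < a ^ 2), Real.sqrt_div' _ (by positivity),
    Real.sqrt_sq ha.le]

section Regions

variable {a b : ℤ} {X : ℝ}

local notation "D" => ((a : ℝ) ^ 2 - (b : ℝ) ^ 2)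

lemma Q1r_rescale (ha : 0 < a) (hD : D ≠ 0) (c s t : ℝ) :
    Q1r a b (c * s) (c / √|D| * t) = -c ^ 2 * pForm ((b : ℝ) / a) s t := by
  have haR : (0 : ℝ) < a := by exact_mod_cast ha
  rw [Q1r, pForm, one_sub_div_sq_div_abs haR.ne', sqrt_abs_one_sub_div_sq haR]
  have hw : 0 < √|D| := Real.sqrt_pos.2 (abs_pos.2 hD)
  have hw2 : |D| = √|D| ^ 2 := (Real.sq_sqrt (abs_nonneg _)).symm
  generalize √|D| = w at hw hw2 ⊢
  rw [hw2]
  field_simp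
  ring

lemma Q2r_rescale (ha : a ≠ 0) (hD : D ≠ 0) (c s t : ℝ) :
    Q2r a b (c * s) (c / √|D| * t) = -c ^ 2 * qForm ((b : ℝ) / a) s t := by
  rw [Q2r, qForm, one_sub_div_sq_div_abs (by exact_mod_cast ha)]
  have hw : 0 < √|D| := Real.sqrt_pos.2 (abs_pos.2 hD)
  have hw2 : |D| = √|D| ^ 2 := (Real.sq_sqrt (abs_nonneg _)).symm
  generalize √|D| = w at hw hw2 ⊢
  rw [hw2]
  field_simp
  ring

lemma Q3r_rescale (ha : 0 < a) (hD : D ≠ 0) (c s t : ℝ) :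
    Q3r a b (c * s) (c / √|D| * t) = -(a * c ^ 2) * rForm ((b : ℝ) / a) s t := by
  have haR : (0 : ℝ) < a := by exact_mod_cast ha
  rw [Q3r, rForm, one_sub_div_sq_div_abs haR.ne', mul_div_assoc, sqrt_abs_one_sub_div_sq haR]
  have h1 : 1 - ((b : ℝ) / a) ^ 2 = D / (a : ℝ) ^ 2 := by field_simp
  have hw : 0 < √|D| := Real.sqrt_pos.2 (abs_pos.2 hD)
  have hw2 : |D| = √|D| ^ 2 := (Real.sq_sqrt (abs_nonneg _)).symm
  rw [h1]
  generalize √|D| = w at hw hw2 ⊢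
  rw [hw2]
  field_simp
  ring

lemma preimage_Rregion_eq_Sregion (ha : 0 < a) (hD : D ≠ 0) (hX : 0 < X) :
    Prod.map (√X * ·) (√X / √|D| * ·) ⁻¹' Rregion a b X = Sregion ((b : ℝ) / a) := by
  have haX : (0 : ℝ) < a * X := mul_pos (by exact_mod_cast ha) hX
  have hcw : 0 < √X / √|D| := div_pos (Real.sqrt_pos.2 hX) (Real.sqrt_pos.2 (abs_pos.2 hD))
  ext ⟨s, t⟩
  simp only [Set.mem_preimage, Prod.map, Rregion, Sregion, Set.mem_ofPred_eq,
    Q1r_rescale ha hD, Q2r_rescale ha.ne' hD, Q3r_rescale ha hD, Real.sq_sqrt hX.le, neg_mul,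
    neg_lt_zero, neg_le_neg_iff, mul_pos_iff_of_pos_left hcw, mul_pos_iff_of_pos_left haX,
    mul_pos_iff_of_pos_left hX, mul_le_iff_le_one_right hX]
  tauto

lemma Rregion_eq_image_Sregion (ha : 0 < a) (hD : D ≠ 0) (hX : 0 < X) :
    Rregion a b X = Prod.map (√X * ·) (√X / √|D| * ·) '' Sregion ((b : ℝ) / a) := by
  have hc : √X ≠ 0 := (Real.sqrt_pos.2 hX).ne'
  have hw : √|D| ≠ 0 := (Real.sqrt_pos.2 (abs_pos.2 hD)).ne'
  rw [← preimage_Rregion_eq_Sregion ha hD hX, Set.image_preimage_eq _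
    ((mul_left_surjective₀ hc).prodMap (mul_left_surjective₀ (div_ne_zero hc hw)))]

lemma volume_Rregion'_eq_volume_Rregion (ha : a ≠ 0) :
    volume (Rregion' a b X) = volume (Rregion a b X) := by
  have ha2 : (2 * a : ℝ) ≠ 0 := by exact_mod_cast mul_ne_zero two_ne_zero ha
  set L : Set (ℝ × ℝ) := {p | 1 * p.1 = 0 * p.2} ∪ {p | 1 * p.1 = a * p.2} ∪
    {p | 2 * a * p.1 = D * p.2}
  have hL : volume L = 0 := by
    refine measure_union_null (measure_union_null ?_ ?_) ?_
    · exact volume_setOf_mul_fst_eq_mul_snd one_ne_zero _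
    · exact volume_setOf_mul_fst_eq_mul_snd one_ne_zero _
    · exact volume_setOf_mul_fst_eq_mul_snd ha2 _
  refine le_antisymm (measure_mono fun p hp => hp.1) ?_
  calc volume (Rregion a b X) = volume (Rregion a b X \ L) := (measure_sdiff_null hL).symm
    _ ≤ volume (Rregion' a b X) := measure_mono fun p ⟨hp, hpL⟩ => by
      simp only [L, Set.mem_union, Set.mem_ofPred_eq, not_or, one_mul, zero_mul] at hpL
      exact ⟨hp, mul_ne_zero hpL.1.1 (sub_ne_zero.2 hpL.1.2), hpL.2⟩

end Regions

theorem volume_Rregion_general (a b : ℤ) (ha : 0 < a) (hb : 0 < b)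
    (hne : a ≠ b) (X : ℝ) (hX : 0 < X) :
    MeasureTheory.volume (Rregion' a b X) = MeasureTheory.volume (Rregion a b X) ∧
      MeasureTheory.volume (Rregion a b X) =
        ENNReal.ofReal (X / Real.sqrt |(a : ℝ) ^ 2 - (b : ℝ) ^ 2|) *
          MeasureTheory.volume (Sregion ((b : ℝ) / (a : ℝ))) := by
  have hD : (a : ℝ) ^ 2 - (b : ℝ) ^ 2 ≠ 0 := by
    rw [sub_ne_zero, Ne, sq_eq_sq₀ (by positivity) (by positivity)]
    exact_mod_cast hne
  refine ⟨volume_Rregion'_eq_volume_Rregion ha.ne', ?_⟩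
  rw [Rregion_eq_image_Sregion ha hD hX, volume_image_prodMap_mul, ← mul_div_assoc,
    Real.mul_self_sqrt hX.le, abs_of_nonneg (by positivity)]

theorem volume_Rregion (a b : ℤ) (ha : 0 < a) (hb : 0 < b)
    (hab : Int.gcd a b = 1) (hne : a ≠ b) (X : ℝ) (hX : 0 < X) :
    MeasureTheory.volume (Rregion' a b X) = MeasureTheory.volume (Rregion a b X) ∧
      MeasureTheory.volume (Rregion a b X) =
        ENNReal.ofReal (X / Real.sqrt |(a : ℝ) ^ 2 - (b : ℝ) ^ 2|) *
          MeasureTheory.volume (Sregion ((b : ℝ) / (a : ℝ))) :=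
  volume_Rregion_general a b ha hb hne X hX
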